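/- Let d ≥ 1 and let A ⊆ ℤ^d be a finite connected set containing at least two sites. Then there exist points x_1, ..., x_m ∈ A with m = diam(A) such that ‖x_i − x_j‖_∞ ≥ |i − j| for all i, j ∈ {1, ..., m}. -/

import Mathlib

open MeasureTheory ProbabilityTheory
open scoped ENNReal NNReal

noncomputable section

namespace RWPaper

/-- Vectors in `ℤ^d`. -/
abbrev V (d : ℕ) := Fin d → ℤ

/-- The `2d` unit step vectors `±e_j` of `ℤ^d`. -/
def stepSet (d : ℕ) : Finset (V d) :=
  Finset.image
    (fun p : Fin d × Bool => fun i => if i = p.1 then (if p.2 then 1 else -1) else 0)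
    Finset.univ

/-- The uniform distribution on the `2d` unit steps of `ℤ^d`. -/
def stepMeasure (d : ℕ) : Measure (V d) :=
  ((stepSet d).card : ℝ≥0∞)⁻¹ • ∑ v ∈ stepSet d, Measure.dirac v

/-- The position at time `k` of the walk started at `x` with increments `ξ 0, ξ 1, ...`. -/
def walk {Ω : Type*} {d : ℕ} (x : V d) (ξ : ℕ → Ω → V d) (k : ℕ) (ω : Ω) : V d :=
  x + ∑ i ∈ Finset.range k, ξ i ω

/-- `ξ` is a family of i.i.d. uniform nearest-neighbour steps under `P`; together with
`walk` this encodes the law `P_x` of the simple random walk on `ℤ^d`. -/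
def IsSteps {Ω : Type*} [MeasurableSpace Ω] {ι : Type*} {d : ℕ}
    (P : Measure Ω) (ξ : ι → Ω → V d) : Prop :=
  (∀ i, Measurable (ξ i)) ∧ (∀ i, Measure.map (ξ i) P = stepMeasure d) ∧
    iIndepFun ξ P

/-- The Euclidean norm on `ℤ^d`. -/
def eunorm {d : ℕ} (x : V d) : ℝ := Real.sqrt (∑ i, ((x i : ℝ)) ^ 2)

/-- The `ℓ^∞` norm on `ℤ^d`, as a natural number. -/
def linf {d : ℕ} (x : V d) : ℕ := Finset.univ.sup fun i => (x i).natAbs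

/-- Two sites of `ℤ^d` are nearest neighbours if their `ℓ¹`-distance is `1`. -/
def NbAdj {d : ℕ} (x y : V d) : Prop := ∑ i, (x i - y i).natAbs = 1

/-- A set `A ⊆ ℤ^d` is connected if any two of its points are joined by a
nearest-neighbour path lying in `A`. -/
def ConnectedSet {d : ℕ} (A : Set (V d)) : Prop :=
  ∀ x ∈ A, ∀ y ∈ A, ∃ (m : ℕ) (p : ℕ → V d), p 0 = x ∧ p m = y ∧
    (∀ k ≤ m, p k ∈ A) ∧ ∀ k < m, NbAdj (p k) (p (k + 1))

/-- The `ℓ^∞` diameter of a finite set. -/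
def fdiam {d : ℕ} (A : Finset (V d)) : ℕ := A.sup fun x => A.sup fun y => linf (x - y)

/-- `ℓ(x,A)`: the maximal `ℓ^∞` distance between `x` and the points of `A`. -/
def ell {d : ℕ} (x : V d) (A : Finset (V d)) : ℕ := A.sup fun y => linf (x - y)

/-!
Pick `a, b ∈ A` and a coordinate `c` with `b c - a c = diam A`. Along a nearest-neighbour path
from `a` to `b` inside `A` the coordinate `c` moves by at most one per step, so it takes every
value `a c + i`, `0 ≤ i < diam A`; a point `x i` of the path at level `a c + i` then satisfies
`‖x i - x j‖_∞ ≥ |(x i - x j) c| = |i - j|`.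
-/

theorem natAbs_apply_le_linf {d : ℕ} (x : V d) (c : Fin d) : (x c).natAbs ≤ linf x :=
  Finset.le_sup (f := fun i => (x i).natAbs) (Finset.mem_univ c)

theorem exists_natAbs_apply_eq_linf {d : ℕ} {x : V d} (h : 0 < linf x) :
    ∃ c, (x c).natAbs = linf x := by
  obtain ⟨c, -, -⟩ := Finset.lt_sup_iff.mp h
  obtain ⟨c, -, hc⟩ := Finset.exists_mem_eq_sup Finset.univ ⟨c, Finset.mem_univ c⟩
    fun i => (x i).natAbs
  exact ⟨c, hc.symm⟩

theorem NbAdj.natAbs_sub_apply_le_one {d : ℕ} {x y : V d} (h : NbAdj x y) (c : Fin d) :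
    (x c - y c).natAbs ≤ 1 :=
  calc (x c - y c).natAbs ≤ ∑ i, (x i - y i).natAbs :=
        Finset.single_le_sum (f := fun i => (x i - y i).natAbs) (fun _ _ => Nat.zero_le _)
          (Finset.mem_univ c)
    _ = 1 := h

theorem nonempty_of_fdiam_pos {d : ℕ} {A : Finset (V d)} (h : 0 < fdiam A) : A.Nonempty := by
  obtain ⟨a, ha, -⟩ := Finset.lt_sup_iff.mp h
  exact ⟨a, ha⟩

theorem exists_linf_sub_eq_fdiam {d : ℕ} {A : Finset (V d)} (hA : A.Nonempty) :
    ∃ a ∈ A, ∃ b ∈ A, linf (a - b) = fdiam A := by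
  obtain ⟨a, ha, hsup⟩ := Finset.exists_mem_eq_sup A hA fun x => A.sup fun y => linf (x - y)
  obtain ⟨b, hb, hsup'⟩ := Finset.exists_mem_eq_sup A hA fun y => linf (a - y)
  exact ⟨a, ha, b, hb, by rw [fdiam, hsup, hsup']⟩

theorem exists_eq_of_natAbs_sub_le_one (f : ℕ → ℤ) (n : ℕ)
    (hf : ∀ k < n, (f (k + 1) - f k).natAbs ≤ 1) {t : ℤ} (h0 : f 0 ≤ t) (hn : t ≤ f n) :
    ∃ k ≤ n, f k = t := by
  induction n with
  | zero => exact ⟨0, le_rfl, le_antisymm h0 hn⟩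
  | succ n ih =>
    by_cases ht : t ≤ f n
    · obtain ⟨k, hk, hfk⟩ := ih (fun k hk => hf k (Nat.lt_succ_of_lt hk)) ht
      exact ⟨k, Nat.le_succ_of_le hk, hfk⟩
    · have := hf n (Nat.lt_succ_self n)
      exact ⟨n + 1, le_rfl, by omega⟩

theorem ConnectedSet.exists_mem_apply_eq {d : ℕ} {A : Set (V d)} (hA : ConnectedSet A)
    {a b : V d} (ha : a ∈ A) (hb : b ∈ A) (c : Fin d) {t : ℤ} (hat : a c ≤ t)
    (htb : t ≤ b c) : ∃ y ∈ A, y c = t := by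
  obtain ⟨n, p, rfl, rfl, hpA, hadj⟩ := hA a ha b hb
  have hstep : ∀ k < n, (p (k + 1) c - p k c).natAbs ≤ 1 := fun k hk => by
    have := (hadj k hk).natAbs_sub_apply_le_one c
    omega
  obtain ⟨k, hk, hpk⟩ := exists_eq_of_natAbs_sub_le_one (fun k => p k c) n hstep hat htb
  exact ⟨p k, hpA k hk, hpk⟩

theorem ConnectedSet.exists_sparse {d : ℕ} {A : Set (V d)} (hA : ConnectedSet A)
    {a b : V d} (ha : a ∈ A) (hb : b ∈ A) {c : Fin d} {m : ℕ} (hm : (m : ℤ) ≤ b c - a c) :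
    ∃ x : Fin m → V d, (∀ i, x i ∈ A) ∧
      ∀ i j : Fin m, (((i : ℕ) : ℤ) - ((j : ℕ) : ℤ)).natAbs ≤ linf (x i - x j) := by
  have level : ∀ i : Fin m, ∃ y ∈ A, y c = a c + (i : ℕ) := fun i =>
    hA.exists_mem_apply_eq ha hb c (by omega) (by omega)
  choose x hxA hxc using level
  refine ⟨x, hxA, fun i j => ?_⟩
  have hdiff : (x i - x j) c = ((i : ℕ) : ℤ) - ((j : ℕ) : ℤ) := by
    simp only [Pi.sub_apply, hxc]
    ring
  exact hdiff ▸ natAbs_apply_le_linf (x i - x j) c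

theorem sparse_subset_of_connected_general (d : ℕ)
    (A : Finset (V d)) (hconn : ConnectedSet (A : Set (V d))) :
    ∃ x : Fin (fdiam A) → V d, (∀ i, x i ∈ A) ∧
      ∀ i j : Fin (fdiam A),
        (((i : ℕ) : ℤ) - ((j : ℕ) : ℤ)).natAbs ≤ linf (x i - x j) := by
  obtain h | hpos := Nat.eq_zero_or_pos (fdiam A)
  · rw [h]
    exact ⟨Fin.elim0, fun i => i.elim0, fun i => i.elim0⟩
  obtain ⟨a, ha, b, hb, hab⟩ := exists_linf_sub_eq_fdiam (nonempty_of_fdiam_pos hpos)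
  obtain ⟨c, hc⟩ := exists_natAbs_apply_eq_linf (hab ▸ hpos)
  rw [hab, Pi.sub_apply] at hc
  rcases le_total (a c) (b c) with h | h
  · exact hconn.exists_sparse (Finset.mem_coe.2 ha) (Finset.mem_coe.2 hb) (c := c) (by omega)
  · exact hconn.exists_sparse (Finset.mem_coe.2 hb) (Finset.mem_coe.2 ha) (c := c) (by omega)

/-- in a finite connected `A ⊆ ℤ^d` with at least two sites, one can find
`m = diam(A)` points `x_1, …, x_m ∈ A` with `‖x_i - x_j‖_∞ ≥ |i - j|` for all `i, j`. -/
theorem sparse_subset_of_connected (d : ℕ) (hd : 1 ≤ d)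
    (A : Finset (V d)) (hconn : ConnectedSet (A : Set (V d))) (hcard : 2 ≤ A.card) :
    ∃ x : Fin (fdiam A) → V d, (∀ i, x i ∈ A) ∧
      ∀ i j : Fin (fdiam A),
        (((i : ℕ) : ℤ) - ((j : ℕ) : ℤ)).natAbs ≤ linf (x i - x j) :=
  sparse_subset_of_connected_general d A hconn
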